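/- Let H be a finitely generated group with the factorization property. Then there exists a countable descending chain U_1 ≥ U_2 ≥ ... of normal subgroups of H such that each H/U_n is torsion-free elementary amenable and every finite index subgroup of H contains some U_n. -/

import Mathlib

universe u

/-- The class of elementary amenable groups: the smallest class of groups containing
all finite groups and all abelian groups, closed under subgroups, quotients,
extensions, and directed unions (and isomorphism). -/
inductive ElementaryAmenable : ∀ (G : Type u) [Group G], Prop
  | of_finite (G : Type u) [Group G] (h : Finite G) : ElementaryAmenable G
  | of_abelian (G : Type u) [Group G] (h : ∀ a b : G, a * b = b * a) : ElementaryAmenable G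
  | of_subgroup (G : Type u) [Group G] (H : Subgroup G) (h : ElementaryAmenable G) :
      ElementaryAmenable H
  | of_quotient (G : Type u) [Group G] (N : Subgroup G) [N.Normal] (h : ElementaryAmenable G) :
      ElementaryAmenable (G ⧸ N)
  | of_extension (G : Type u) [Group G] (N : Subgroup G) [N.Normal]
      (hN : ElementaryAmenable N) (hQ : ElementaryAmenable (G ⧸ N)) : ElementaryAmenable G
  | of_directedUnion (G : Type u) [Group G] (ι : Type u) (K : ι → Subgroup G)
      (hdir : Directed (· ≤ ·) K) (hsup : (⨆ i, K i) = ⊤)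
      (h : ∀ i, ElementaryAmenable (K i)) : ElementaryAmenable G
  | of_mulEquiv (G H : Type u) [Group G] [Group H] (e : G ≃* H) (h : ElementaryAmenable G) :
      ElementaryAmenable H

/-- A group `H` has the factorization property if every homomorphism from `H` to a
finite group factors through a torsion-free elementary amenable group. -/
def HasFactorizationProperty (H : Type u) [Group H] : Prop :=
  ∀ (P : GrpCat.{u}), Finite P → ∀ f : H →* P,
    ∃ (M : GrpCat.{u}) (g : H →* M) (h : (M : Type u) →* P),
      (∀ g : M, g ≠ 1 → ¬IsOfFinOrder g) ∧ ElementaryAmenable M ∧ h.comp g = f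

/-!
For a finitely generated `H` there are only finitely many homomorphisms `H → Perm (Fin n)`, so
the intersection `Kₙ` of their kernels has finite index, and a subgroup of index `n` contains
`Kₙ` (the kernel of the action on its cosets). The factorization property gives `Vₙ ≤ Kₙ` with
torsion-free elementary amenable quotient, and `Uₙ = V₀ ⊓ ⋯ ⊓ Vₙ` works because `H ⧸ Uₙ` embeds
in the product of the `H ⧸ Vᵢ`, and both properties pass to products and subgroups.
-/

namespace ElementaryAmenable

theorem of_injective {A B : Type u} [Group A] [Group B] (f : A →* B)
    (hf : Function.Injective f) (hB : ElementaryAmenable B) : ElementaryAmenable A :=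
  of_mulEquiv _ _ (MonoidHom.ofInjective hf).symm (of_subgroup B f.range hB)

theorem prod {A B : Type u} [Group A] [Group B] (hA : ElementaryAmenable A)
    (hB : ElementaryAmenable B) : ElementaryAmenable (A × B) := by
  let p : A × B →* A := MonoidHom.fst A B
  have hker : ElementaryAmenable p.ker := by
    refine of_injective ((MonoidHom.snd A B).comp p.ker.subtype) ?_ hB
    rintro ⟨x, hx⟩ ⟨y, hy⟩ hxy
    exact Subtype.ext (Prod.ext (hx.trans hy.symm) hxy)
  exact of_extension _ p.ker hker <|
    of_mulEquiv _ _ (QuotientGroup.quotientKerEquivOfSurjective p Prod.fst_surjective).symm hA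

end ElementaryAmenable

/-- Torsion-freeness in the group-theoretic sense. Mathlib's `IsMulTorsionFree` asks for unique
roots, which is stronger for noncommutative groups (e.g. the Klein bottle group). -/
def Group.IsTorsionFree (G : Type*) [Group G] : Prop :=
  ∀ g : G, g ≠ 1 → ¬IsOfFinOrder g

namespace Group.IsTorsionFree

theorem of_injective {A B : Type*} [Group A] [Group B] {f : A →* B}
    (hf : Function.Injective f) (hB : IsTorsionFree B) : IsTorsionFree A :=
  fun a ha hfin => hB (f a) ((map_ne_one_iff f hf).2 ha) (f.isOfFinOrder hfin)

theorem prod {A B : Type*} [Group A] [Group B] (hA : IsTorsionFree A) (hB : IsTorsionFree B) :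
    IsTorsionFree (A × B) := by
  rintro ⟨a, b⟩ hab hfin
  obtain ha | hb : a ≠ 1 ∨ b ≠ 1 := by simpa only [ne_eq, Prod.mk_eq_one, not_and_or] using hab
  exacts [hA a ha hfin.fst, hB b hb hfin.snd]

theorem of_subsingleton (A : Type*) [Group A] [Subsingleton A] : IsTorsionFree A :=
  fun a ha => (ha (Subsingleton.elim a 1)).elim

end Group.IsTorsionFree

namespace Subgroup

variable {G : Type u} [Group G]

/-- `G ⧸ N` is torsion-free elementary amenable (TFEA), phrased via kernels so that no
normality instance is needed. -/
def HasTFEAQuotient (N : Subgroup G) : Prop :=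
  ∃ (M : Type u) (_ : Group M) (π : G →* M),
    π.ker = N ∧ Group.IsTorsionFree M ∧ ElementaryAmenable M

theorem hasTFEAQuotient_top : (⊤ : Subgroup G).HasTFEAQuotient :=
  ⟨PUnit, inferInstance, 1, MonoidHom.ker_one, .of_subsingleton _,
    ElementaryAmenable.of_finite _ inferInstance⟩

theorem HasTFEAQuotient.inf {N N' : Subgroup G} (hN : N.HasTFEAQuotient)
    (hN' : N'.HasTFEAQuotient) : (N ⊓ N').HasTFEAQuotient := by
  obtain ⟨M, _, π, rfl, hMtf, hM⟩ := hN
  obtain ⟨M', _, π', rfl, hMtf', hM'⟩ := hN'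
  exact ⟨M × M', inferInstance, π.prod π', MonoidHom.ker_prod π π', hMtf.prod hMtf', hM.prod hM'⟩

theorem hasTFEAQuotient_biInf {ι : Type*} (s : Finset ι) {N : ι → Subgroup G}
    (hN : ∀ i ∈ s, (N i).HasTFEAQuotient) : (⨅ i ∈ s, N i).HasTFEAQuotient := by
  classical
  induction s using Finset.induction_on with
  | empty => simpa using hasTFEAQuotient_top
  | insert i s _ ih =>
    rw [Finset.iInf_insert]
    exact (hN i (s.mem_insert_self i)).inf (ih fun j hj => hN j (Finset.mem_insert_of_mem hj))

theorem HasTFEAQuotient.normal {N : Subgroup G} (hN : N.HasTFEAQuotient) : N.Normal := by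
  obtain ⟨M, _, π, rfl, -⟩ := hN
  exact π.normal_ker

theorem HasTFEAQuotient.exists_surjective {N : Subgroup G} (hN : N.HasTFEAQuotient) :
    ∃ (M : GrpCat.{u}) (π : G →* M), Function.Surjective π ∧ π.ker = N ∧
      (∀ g : M, g ≠ 1 → ¬IsOfFinOrder g) ∧ ElementaryAmenable M := by
  obtain ⟨M, _, π, rfl, hMtf, hM⟩ := hN
  exact ⟨GrpCat.of π.range, π.rangeRestrict, π.rangeRestrict_surjective, π.ker_rangeRestrict,
    hMtf.of_injective π.range.subtype_injective,
    ElementaryAmenable.of_subgroup M π.range hM⟩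

end Subgroup

theorem HasFactorizationProperty.exists_hasTFEAQuotient_le {H : Type u} [Group H]
    (hH : HasFactorizationProperty H) (K : Subgroup H) [K.FiniteIndex] :
    ∃ N ≤ K, N.HasTFEAQuotient := by
  obtain ⟨M, g, h, hTF, hM, hhg⟩ := hH (GrpCat.of (H ⧸ K.normalCore))
    K.normalCore.finite_quotient_of_finiteIndex (QuotientGroup.mk' K.normalCore)
  refine ⟨g.ker, fun x hx => K.normalCore_le ?_, M, inferInstance, g, rfl, hTF, hM⟩
  rw [← QuotientGroup.ker_mk' K.normalCore, ← hhg, MonoidHom.mem_ker, MonoidHom.comp_apply,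
    MonoidHom.mem_ker.mp hx, map_one]

instance MonoidHom.finite_of_fg (G P : Type*) [Group G] [Group.FG G] [Monoid P] [Finite P] :
    Finite (G →* P) := by
  obtain ⟨S, hS⟩ := Group.FG.out (G := G)
  refine Finite.of_injective (fun f : G →* P => fun s : S => f s) fun f f' hff' => ?_
  exact MonoidHom.eq_of_eqOn_dense hS fun x hx => congrFun hff' ⟨x, hx⟩

namespace Subgroup

variable {G : Type*} [Group G]

instance finiteIndex_iInf_ker [Group.FG G] (P : Type*) [Group P] [Finite P] :
    (⨅ f : G →* P, f.ker).FiniteIndex :=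
  finiteIndex_iInf fun _ => inferInstance

theorem iInf_ker_perm_index_le (K : Subgroup G) [K.FiniteIndex] :
    ⨅ f : G →* Equiv.Perm (Fin K.index), f.ker ≤ K := by
  have : Finite (G ⧸ K) := K.finite_quotient_of_finiteIndex
  let e : Equiv.Perm (G ⧸ K) ≃* Equiv.Perm (Fin K.index) :=
    (Finite.equivFin (G ⧸ K)).permCongrHom
  calc ⨅ f : G →* Equiv.Perm (Fin K.index), f.ker
      ≤ ((e : _ →* _).comp (MulAction.toPermHom G (G ⧸ K))).ker := iInf_le _ _
    _ = K.normalCore := by rw [MonoidHom.ker_mulEquiv_comp, normalCore_eq_ker]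
    _ ≤ K := K.normalCore_le

end Subgroup

/-- A finitely generated group with the factorization property admits a descending
chain of normal subgroups `U₁ ≥ U₂ ≥ ⋯` with each `H/Uₙ` torsion-free elementary
amenable, such that every finite index subgroup of `H` contains some `Uₙ`. -/
theorem exists_cofinal_chain (H : Type u) [Group H] [Group.FG H]
    (hH : HasFactorizationProperty H) :
    ∃ U : ℕ → Subgroup H, Antitone U ∧ (∀ n, (U n).Normal) ∧
      (∀ n, ∃ (M : GrpCat.{u}) (π : H →* M), Function.Surjective π ∧ π.ker = U n ∧
        (∀ g : M, g ≠ 1 → ¬IsOfFinOrder g) ∧ ElementaryAmenable M) ∧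
      (∀ K : Subgroup H, K.FiniteIndex → ∃ n, U n ≤ K) := by
  choose V hVle hV using fun n =>
    hH.exists_hasTFEAQuotient_le (⨅ f : H →* Equiv.Perm (Fin n), f.ker)
  have hU : ∀ n, (⨅ i ∈ Finset.range (n + 1), V i).HasTFEAQuotient := fun n =>
    Subgroup.hasTFEAQuotient_biInf _ fun i _ => hV i
  refine ⟨fun n => ⨅ i ∈ Finset.range (n + 1), V i, ?_, fun n => (hU n).normal,
    fun n => (hU n).exists_surjective, fun K hK => ⟨K.index, ?_⟩⟩
  · intro m n hmn
    exact biInf_mono fun _ hi => Finset.range_subset_range.2 (by omega) hi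
  · calc ⨅ i ∈ Finset.range (K.index + 1), V i
        ≤ V K.index := biInf_le _ (Finset.self_mem_range_succ _)
      _ ≤ ⨅ f : H →* Equiv.Perm (Fin K.index), f.ker := hVle _
      _ ≤ K := K.iInf_ker_perm_index_le
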